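/- arXiv:2006.08276 — 6 statements merged into one kernel-verified Lean document; each statement's English description precedes it below -/
import Mathlib

section
/- Let g : TM → V be a velocity output, i.e. a smooth map into a finite-dimensional vector space V that is linear on each fibre T_ξ M. Then there exists a linear map f : V → 𝔛(M) into the smooth vector fields on M satisfying f(g(η_ξ))(ξ) = η_ξ for all ξ ∈ M and η_ξ ∈ T_ξ M, if and only if g restricted to each fibre T_ξ M is injective. -/
open Manifold Bundle

/-!
Injectivity is forced by `f (g η) ξ = η`. Conversely, give `V` an inner product and send `v` to
the vector field whose value at `ξ` is the least-squares solution `u` of `g_ξ u = v`, i.e.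
`(g_ξ* g_ξ)⁻¹ g_ξ* v`. This is linear in `v` and a left inverse of each `g_ξ`. Read in a local
trivialization of `TM` it becomes the same formula applied to a smooth family of injective linear
maps, and inversion of linear maps is smooth, so the vector field is smooth.
-/

open Function Module
open scoped ContDiff

noncomputable section

namespace ContinuousLinearMap

variable {E E₂ V : Type*} [NormedAddCommGroup E] [NormedSpace ℝ E]
  [NormedAddCommGroup E₂] [NormedSpace ℝ E₂] [NormedAddCommGroup V] [InnerProductSpace ℝ V]

def innerDualL : (E →L[ℝ] V) →L[ℝ] V →L[ℝ] StrongDual ℝ E :=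
  ((compL ℝ V (V →L[ℝ] ℝ) (E →L[ℝ] ℝ)).flip (innerSL ℝ)).comp (compL ℝ E V ℝ).flip

@[simp]
lemma innerDualL_apply_apply_apply (B : E →L[ℝ] V) (v : V) (w : E) :
    innerDualL B v w = inner ℝ v (B w) :=
  rfl

def gramL (B : E →L[ℝ] V) : E →L[ℝ] StrongDual ℝ E := innerDualL B ∘L B

lemma gramL_apply_apply (B : E →L[ℝ] V) (u w : E) : gramL B u w = inner ℝ (B u) (B w) :=
  rfl

lemma contDiff_gramL {n : WithTop ℕ∞} : ContDiff ℝ n (gramL : (E →L[ℝ] V) → _) :=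
  innerDualL.contDiff.clm_comp contDiff_id

lemma injective_gramL {B : E →L[ℝ] V} (hB : Injective B) : Injective (gramL B) := by
  rw [injective_iff_map_eq_zero]
  intro u hu
  have h : inner ℝ (B u) (B u) = (0 : ℝ) := by rw [← gramL_apply_apply, hu]; rfl
  exact hB (by rw [inner_self_eq_zero.mp h, map_zero])

lemma isInvertible_gramL [FiniteDimensional ℝ E] {B : E →L[ℝ] V} (hB : Injective B) :
    (gramL B).IsInvertible := by
  have hdim : finrank ℝ E = finrank ℝ (StrongDual ℝ E) :=
    Subspace.dual_finrank_eq.symm.trans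
      (LinearMap.toContinuousLinearMap : Dual ℝ E ≃ₗ[ℝ] _).finrank_eq
  have hsurj : Surjective (gramL B) :=
    (LinearMap.injective_iff_surjective_of_finrank_eq_finrank hdim).mp (injective_gramL hB)
  exact ⟨(LinearEquiv.ofBijective (gramL B : E →ₗ[ℝ] StrongDual ℝ E)
    ⟨injective_gramL hB, hsurj⟩).toContinuousLinearEquiv, rfl⟩

/-- For injective `B` this is the Moore–Penrose inverse `(B* B)⁻¹ B*`. The Gram map takes values
in the dual of `E`, so no inner product on `E` is involved, which is what makes the construction
compatible with changes of coordinates on `E` (`leastSquaresInverse_comp_equiv`). -/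
def leastSquaresInverse (B : E →L[ℝ] V) : V →L[ℝ] E := (gramL B).inverse ∘L innerDualL B

variable [FiniteDimensional ℝ E] {B : E →L[ℝ] V}

lemma gramL_leastSquaresInverse_apply (hB : Injective B) (v : V) :
    gramL B (leastSquaresInverse B v) = innerDualL B v :=
  (isInvertible_gramL hB).self_apply_inverse _

lemma leastSquaresInverse_apply_apply (hB : Injective B) (u : E) :
    leastSquaresInverse B (B u) = u :=
  (isInvertible_gramL hB).inverse_apply_self u

lemma leastSquaresInverse_comp_equiv [FiniteDimensional ℝ E₂] (hB : Injective B)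
    (D : E₂ ≃L[ℝ] E) :
    leastSquaresInverse (B ∘L (D : E₂ →L[ℝ] E)) =
      (D.symm : E →L[ℝ] E₂) ∘L leastSquaresInverse B := by
  have hBD : Injective (B ∘L (D : E₂ →L[ℝ] E)) := hB.comp D.injective
  ext v : 1
  apply injective_gramL hBD
  rw [gramL_leastSquaresInverse_apply hBD]
  ext w
  simpa [gramL_apply_apply] using
    (DFunLike.congr_fun (gramL_leastSquaresInverse_apply hB v) (D w)).symm

lemma contDiffAt_leastSquaresInverse {n : WithTop ℕ∞} (hB : Injective B) :
    ContDiffAt ℝ n leastSquaresInverse B := by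
  have hinv : ContDiffAt ℝ n (fun B : E →L[ℝ] V => (gramL B).inverse) B :=
    (isInvertible_gramL hB).contDiffAt_map_inverse.comp (f := gramL) B contDiff_gramL.contDiffAt
  exact hinv.clm_comp (ContinuousLinearMap.contDiff _).contDiffAt

end ContinuousLinearMap

end

open ContinuousLinearMap

theorem contMDiffAt_clm_apply_iff {𝕜 : Type*} [NontriviallyNormedField 𝕜] [CompleteSpace 𝕜]
    {EM HM : Type*} [NormedAddCommGroup EM] [NormedSpace 𝕜 EM] [TopologicalSpace HM]
    {I : ModelWithCorners 𝕜 EM HM} {M : Type*} [TopologicalSpace M] [ChartedSpace HM M]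
    {E F : Type*} [NormedAddCommGroup E] [NormedSpace 𝕜 E] [FiniteDimensional 𝕜 E]
    [NormedAddCommGroup F] [NormedSpace 𝕜 F] {n : WithTop ℕ∞} {f : M → E →L[𝕜] F} {x : M} :
    ContMDiffAt I 𝓘(𝕜, E →L[𝕜] F) n f x ↔ ∀ y, ContMDiffAt I 𝓘(𝕜, F) n (fun x => f x y) x := by
  refine ⟨fun h y => h.clm_apply contMDiffAt_const, fun h => ?_⟩
  let d := finrank 𝕜 E
  have hd : d = finrank 𝕜 (Fin d → 𝕜) := (finrank_fin_fun 𝕜).symm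
  let e₁ := ContinuousLinearEquiv.ofFinrankEq hd
  let e₂ := (e₁.arrowCongr (1 : F ≃L[𝕜] F)).trans (ContinuousLinearEquiv.piRing (Fin d))
  rw [← id_comp f, ← e₂.symm_comp_self]
  exact e₂.symm.contDiff.comp_contMDiffAt (contMDiffAt_pi_space.mpr fun i => h _)

theorem contMDiff_leastSquaresInverse_vectorField
    {E' H' : Type*} [NormedAddCommGroup E'] [NormedSpace ℝ E'] [FiniteDimensional ℝ E']
    [TopologicalSpace H'] {J : ModelWithCorners ℝ E' H'}
    {M : Type*} [TopologicalSpace M] [ChartedSpace H' M] [IsManifold J ∞ M]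
    {V : Type*} [NormedAddCommGroup V] [InnerProductSpace ℝ V] {G : M → E' →L[ℝ] V}
    (hG : ContMDiff J.tangent 𝓘(ℝ, V) ∞ (fun p : TangentBundle J M => G p.1 p.2))
    (hG_inj : ∀ x, Injective (G x)) (v : V) :
    ContMDiff J J.tangent ∞ (fun x => (⟨x, leastSquaresInverse (G x) v⟩ : TangentBundle J M)) := by
  intro x₀
  refine (Bundle.contMDiffAt_section x₀).mpr ?_
  let e := trivializationAt E' (TangentSpace J) x₀
  have hx₀ : x₀ ∈ e.baseSet := FiberBundle.mem_baseSet_trivializationAt E' (TangentSpace J) x₀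
  let Gloc : M → E' →L[ℝ] V := fun x => G x ∘L e.symmL ℝ x
  have hGloc : ContMDiffAt J 𝓘(ℝ, E' →L[ℝ] V) ∞ Gloc x₀ := by
    refine contMDiffAt_clm_apply_iff.mpr fun y => ?_
    have hsec : ContMDiffOn J J.tangent ∞ (fun x => e.toOpenPartialHomeomorph.symm (x, y))
        e.baseSet :=
      e.contMDiffOn_symm.comp (contMDiff_id.prodMk contMDiff_const).contMDiffOn
        fun x hx => by rw [e.target_eq]; exact ⟨hx, trivial⟩
    refine ((hG.comp_contMDiffOn hsec).contMDiffAt (e.open_baseSet.mem_nhds hx₀))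
      |>.congr_of_eventuallyEq ?_
    filter_upwards [e.open_baseSet.mem_nhds hx₀] with x hx
    rw [Function.comp_apply, ← e.mk_symm hx y]
    exact congrArg (G x) (e.symmL_apply hx y)
  have hGloc_eq : ∀ x (hx : x ∈ e.baseSet),
      Gloc x = G x ∘L ((e.continuousLinearEquivAt ℝ x hx).symm : E' →L[ℝ] TangentSpace J x) :=
    fun x hx => by simp only [Gloc, e.symm_continuousLinearEquivAt_eq' hx]
  have hGloc_inj : Injective (Gloc x₀) := by
    rw [hGloc_eq x₀ hx₀]
    exact (hG_inj x₀).comp (e.continuousLinearEquivAt ℝ x₀ hx₀).symm.injective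
  have hsmooth : ContMDiffAt J 𝓘(ℝ, E') ∞ (fun x => leastSquaresInverse (Gloc x) v) x₀ :=
    ((contDiffAt_leastSquaresInverse hGloc_inj).comp_contMDiffAt hGloc).clm_apply
      contMDiffAt_const
  refine hsmooth.congr_of_eventuallyEq ?_
  filter_upwards [e.open_baseSet.mem_nhds hx₀] with x hx
  rw [hGloc_eq x hx]
  exact (DFunLike.congr_fun (leastSquaresInverse_comp_equiv (hG_inj x)
    (e.continuousLinearEquivAt ℝ x hx).symm) v).symm

/-- Let `g : TM → V` be a velocity output (smooth, fibrewise linear,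
into a finite-dimensional vector space `V`). There exists a linear map
`f : V → 𝔛(M)` into the smooth vector fields on `M` with `f(g(η_ξ))(ξ) = η_ξ` for all
tangent vectors `η_ξ`, if and only if `g` is fibrewise injective (complete). -/
theorem stmt2
    {E' : Type*} [NormedAddCommGroup E'] [NormedSpace ℝ E']
    {H' : Type*} [TopologicalSpace H'] (J : ModelWithCorners ℝ E' H')
    {M : Type*} [TopologicalSpace M] [ChartedSpace H' M] [IsManifold J ((⊤ : ℕ∞) : WithTop ℕ∞) M]
    {V : Type*} [NormedAddCommGroup V] [NormedSpace ℝ V] [FiniteDimensional ℝ V]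
    (g : TangentBundle J M → V)
    (hg_smooth : ContMDiff J.tangent 𝓘(ℝ, V) (⊤ : ℕ∞) g)
    (hg_lin : ∀ x : M, IsLinearMap ℝ (fun u : TangentSpace J x => g ⟨x, u⟩)) :
    (∃ f : V →ₗ[ℝ] (∀ x : M, TangentSpace J x),
      (∀ v : V, ContMDiff J J.tangent (⊤ : ℕ∞)
        (fun x : M => (⟨x, f v x⟩ : TangentBundle J M))) ∧
      (∀ (x : M) (u : TangentSpace J x), f (g ⟨x, u⟩) x = u)) ↔
    (∀ x : M, Function.Injective (fun u : TangentSpace J x => g ⟨x, u⟩)) := by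
  refine ⟨fun ⟨f, _, hf⟩ x u u' huu' => ?_, fun hinj => ?_⟩
  · rw [← hf x u, ← hf x u']
    exact congrArg (f · x) huu'
  rcases isEmpty_or_nonempty M with hM | ⟨⟨x₀⟩⟩
  · exact ⟨0, fun _ x => isEmptyElim x, fun x => isEmptyElim x⟩
  have : FiniteDimensional ℝ E' :=
    FiniteDimensional.of_injective (IsLinearMap.mk' _ (hg_lin x₀)) (hinj x₀)
  -- `V` carries no inner product, so we transport it from a Euclidean model.
  let φ : V ≃L[ℝ] EuclideanSpace ℝ (Fin (finrank ℝ V)) := toEuclidean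
  let G : M → E' →L[ℝ] EuclideanSpace ℝ (Fin (finrank ℝ V)) := fun x =>
    (φ : V →L[ℝ] _) ∘L LinearMap.toContinuousLinearMap (IsLinearMap.mk' _ (hg_lin x))
  have hG_inj : ∀ x, Injective (G x) := fun x => φ.injective.comp (hinj x)
  refine ⟨LinearMap.pi fun x => (leastSquaresInverse (G x) ∘L (φ : V →L[ℝ] _)).toLinearMap,
    fun v => ?_, fun x u => ?_⟩
  · exact contMDiff_leastSquaresInverse_vectorField (φ.contDiff.comp_contMDiff hg_smooth)
      hG_inj (φ v)
  · exact leastSquaresInverse_apply_apply (hG_inj x) u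
end

section
/- Let Λ : M × V → 𝔤 be a lift for a linear system function f (so dφ_ξ Λ(ξ,v) = f(ξ,v)), fix an origin ξ̄ ∈ M, and consider the lifted system Ẋ = dL_X Λ(φ_{ξ̄}(X), v(t)) on G. If X(t) solves the lifted system with φ(X(0), ξ̄) = ξ(0), then ξ(t) := φ(X(t), ξ̄) solves ξ̇ = f(ξ, v(t)) with initial condition ξ(0); i.e. solutions of the lifted system project to solutions of the original system under φ_{ξ̄}. -/
/-!
Since `φ` is a right action, `φ (X s) ξ₀ = φ ((X t)⁻¹ * X s) ξ(t)` with `ξ(t) = φ (X t) ξ₀`.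
Differentiating at `s = t`, the velocity of `ξ` is the derivative of the orbit map of `ξ(t)` at `1`
applied to `dL_{(X t)⁻¹} Ẋ(t) = Λ(ξ(t), v(t))`, which the lift condition identifies with
`f(ξ(t), v(t))`.
-/

open Manifold

section

variable {𝕜 : Type*} [NontriviallyNormedField 𝕜]
  {E : Type*} [NormedAddCommGroup E] [NormedSpace 𝕜 E]
  {H : Type*} [TopologicalSpace H] {I : ModelWithCorners 𝕜 E H} {n : WithTop ℕ∞}
  {G : Type*} [TopologicalSpace G] [ChartedSpace H G] [Group G] [ContMDiffMul I n G]
  {E' : Type*} [NormedAddCommGroup E'] [NormedSpace 𝕜 E']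
  {H' : Type*} [TopologicalSpace H'] {J : ModelWithCorners 𝕜 E' H'}
  {M : Type*} [TopologicalSpace M] [ChartedSpace H' M]
  {F : Type*} [NormedAddCommGroup F] [NormedSpace 𝕜 F]
  {HN : Type*} [TopologicalSpace HN] {K : ModelWithCorners 𝕜 F HN}
  {N : Type*} [TopologicalSpace N] [ChartedSpace HN N]
  {φ : G → M → M}

theorem mfderiv_inv_mul_left_apply_mfderiv_mul_left (hn : n ≠ 0) (g h : G)
    (v : TangentSpace I h) :
    mfderiv I I (g⁻¹ * ·) (g * h) (mfderiv I I (g * ·) h v) = v := by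
  have hcancel : (fun x : G ↦ g⁻¹ * x) ∘ (fun x ↦ g * x) = id := by
    ext x; simp
  rw [← mfderiv_comp_apply h ((contMDiff_mul_left (n := n)).mdifferentiableAt hn)
    ((contMDiff_mul_left (n := n)).mdifferentiableAt hn), hcancel, mfderiv_id]
  rfl

theorem mfderiv_orbit_apply (hφ : ContMDiff (I.prod J) J n (fun p : G × M ↦ φ p.1 p.2))
    (hn : n ≠ 0) (hcomp : ∀ (A B : G) (x : M), φ A (φ B x) = φ (B * A) x)
    {X : N → G} {t : N} (hX : MDifferentiableAt K I X t) (ξ : M) (w : TangentSpace K t) :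
    mfderiv K J (fun s ↦ φ (X s) ξ) t w =
      mfderiv I J (φ · (φ (X t) ξ)) 1 (mfderiv I I ((X t)⁻¹ * ·) (X t) (mfderiv K I X t w)) := by
  have hfactor : (fun s ↦ φ (X s) ξ) = (φ · (φ (X t) ξ)) ∘ ((X t)⁻¹ * ·) ∘ X := by
    ext s; simp [hcomp]
  have horbit : MDifferentiableAt I J (φ · (φ (X t) ξ)) 1 :=
    (hφ.comp (contMDiff_id.prodMk contMDiff_const)).mdifferentiableAt hn
  have htrans : MDifferentiableAt I I ((X t)⁻¹ * ·) (X t) :=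
    (contMDiff_mul_left (n := n)).mdifferentiableAt hn
  rw [hfactor]
  exact (mfderiv_comp_apply_of_eq t horbit (htrans.comp t hX) (by simp) w).trans
    (congrArg _ (mfderiv_comp_apply t htrans hX w))

end

theorem stmt10_general
    {E : Type*} [NormedAddCommGroup E] [NormedSpace ℝ E]
    {H : Type*} [TopologicalSpace H] (I : ModelWithCorners ℝ E H)
    {G : Type*} [TopologicalSpace G] [ChartedSpace H G] [Group G] [LieGroup I (⊤ : ℕ∞) G]
    {E' : Type*} [NormedAddCommGroup E'] [NormedSpace ℝ E']
    {H' : Type*} [TopologicalSpace H'] (J : ModelWithCorners ℝ E' H')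
    {M : Type*} [TopologicalSpace M] [ChartedSpace H' M]
    {V : Type*} [NormedAddCommGroup V] [NormedSpace ℝ V]
    (φ : G → M → M)
    (hφ : ContMDiff (I.prod J) J (⊤ : ℕ∞) (fun p : G × M => φ p.1 p.2))
    (hcomp : ∀ (A B : G) (x : M), φ A (φ B x) = φ (B * A) x)
    (f : V →ₗ[ℝ] (∀ x : M, TangentSpace J x))
    (Λ : M → V →ₗ[ℝ] TangentSpace I (1 : G))
    (hΛ_lift : ∀ (ξ : M) (v : V), mfderiv I J (fun A => φ A ξ) (1 : G) (Λ ξ v) = f v ξ)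
    (ξ0 : M) (v : ℝ → V)
    (X : ℝ → G) (hX_diff : MDifferentiable 𝓘(ℝ, ℝ) I X)
    (hX_ode : ∀ t : ℝ, mfderiv 𝓘(ℝ, ℝ) I X t (show ℝ from 1)
      = mfderiv I I (fun Y => X t * Y) (1 : G) (Λ (φ (X t) ξ0) (v t)))
    (ξinit : M) (hinit : φ (X 0) ξ0 = ξinit) :
    φ (X 0) ξ0 = ξinit ∧
    ∀ t : ℝ, mfderiv 𝓘(ℝ, ℝ) J (fun s => φ (X s) ξ0) t (show ℝ from 1) = f (v t) (φ (X t) ξ0) := by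
  have hn : ((⊤ : ℕ∞) : WithTop ℕ∞) ≠ 0 := by simp
  refine ⟨hinit, fun t => ?_⟩
  have hcancel := mfderiv_inv_mul_left_apply_mfderiv_mul_left hn (X t) 1 (Λ (φ (X t) ξ0) (v t))
  rw [mul_one] at hcancel
  refine (mfderiv_orbit_apply hφ hn hcomp (hX_diff t) ξ0 _).trans ?_
  rw [hX_ode]
  exact (congrArg _ hcancel).trans (hΛ_lift _ _)

/-- Let `Λ : M × V → 𝔤` be a lift for the linear system function `f`
(`dφ_ξ Λ(ξ,v) = f(ξ,v)`), fix an origin `ξ0 ∈ M` and let `X(t)` solve the lifted system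
`Ẋ = dL_X Λ(φ_{ξ0}(X), v(t))` on `G` with `φ(X(0), ξ0) = ξ(0)`. Then
`ξ(t) := φ(X(t), ξ0)` solves `ξ̇ = f(ξ, v(t))` with initial condition `ξ(0)`. -/
theorem stmt10
    {E : Type*} [NormedAddCommGroup E] [NormedSpace ℝ E]
    {H : Type*} [TopologicalSpace H] (I : ModelWithCorners ℝ E H)
    {G : Type*} [TopologicalSpace G] [ChartedSpace H G] [Group G] [LieGroup I (⊤ : ℕ∞) G]
    {E' : Type*} [NormedAddCommGroup E'] [NormedSpace ℝ E']
    {H' : Type*} [TopologicalSpace H'] (J : ModelWithCorners ℝ E' H')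
    {M : Type*} [TopologicalSpace M] [ChartedSpace H' M] [IsManifold J (⊤ : ℕ∞) M]
    {V : Type*} [NormedAddCommGroup V] [NormedSpace ℝ V]
    (φ : G → M → M)
    (hφ : ContMDiff (I.prod J) J (⊤ : ℕ∞) (fun p : G × M => φ p.1 p.2))
    (hcomp : ∀ (A B : G) (x : M), φ A (φ B x) = φ (B * A) x)
    (hid : ∀ x : M, φ 1 x = x)
    (htrans : ∀ x y : M, ∃ A : G, φ A x = y)
    (f : V →ₗ[ℝ] (∀ x : M, TangentSpace J x))
    (Λ : M → V →ₗ[ℝ] TangentSpace I (1 : G))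
    (hΛ_smooth : ContMDiff (J.prod 𝓘(ℝ, V)) 𝓘(ℝ, E) (⊤ : ℕ∞)
      (fun p : M × V => show E from Λ p.1 p.2))
    (hΛ_lift : ∀ (ξ : M) (v : V), mfderiv I J (fun A => φ A ξ) (1 : G) (Λ ξ v) = f v ξ)
    (ξ0 : M) (v : ℝ → V) (hv : Continuous v)
    (X : ℝ → G) (hX_diff : MDifferentiable 𝓘(ℝ, ℝ) I X)
    (hX_ode : ∀ t : ℝ, mfderiv 𝓘(ℝ, ℝ) I X t (show ℝ from 1)
      = mfderiv I I (fun Y => X t * Y) (1 : G) (Λ (φ (X t) ξ0) (v t)))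
    (ξinit : M) (hinit : φ (X 0) ξ0 = ξinit) :
    φ (X 0) ξ0 = ξinit ∧
    ∀ t : ℝ, mfderiv 𝓘(ℝ, ℝ) J (fun s => φ (X s) ξ0) t (show ℝ from 1) = f (v t) (φ (X t) ξ0) :=
  stmt10_general I J φ hφ hcomp f Λ hΛ_lift ξ0 v X hX_diff hX_ode ξinit hinit
end

section
/- Let 𝔣 : 𝒱 → 𝔛(M) be an equivariant linear system function (with actions φ on M and ψ on 𝒱) and Λ : M × 𝒱 → 𝔤 an equivariant lift, i.e. Ad_{X⁻¹} Λ(ξ,v) = Λ(φ_X(ξ), ψ_X(v)) for all X, ξ, v. Fix ξ̄ ∈ M and define the lifted system function F(X, v) := dL_X Λ(φ_{ξ̄}(X), v) on G. Then F is equivariant under right translation: dR_Z F(X, v) = F(XZ, ψ_Z(v)) for all X, Z ∈ G and v ∈ 𝒱. -/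
/-!
Composing right translation by `Z` with left translation by `X` is the map `Y ↦ X Y Z`, which
also factors as conjugation by `Z⁻¹` followed by left translation by `X Z`. Hence
`dR_Z (dL_X w) = dL_{XZ} (Ad_{Z⁻¹} w)`, and the equivariance of the lift `Λ` turns
`Ad_{Z⁻¹} Λ(φ_{ξ0}(X), v)` into `Λ(φ_{ξ0}(X Z), ψ_Z v)`.
-/

open Manifold

section LieGroup

variable {𝕜 : Type*} [NontriviallyNormedField 𝕜]
  {E : Type*} [NormedAddCommGroup E] [NormedSpace 𝕜 E]
  {H : Type*} [TopologicalSpace H] {I : ModelWithCorners 𝕜 E H}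
  {G : Type*} [TopologicalSpace G] [ChartedSpace H G]

theorem mfderiv_mul_right_mfderiv_mul_left [Monoid G] [ContMDiffMul I 1 G] (X Z : G)
    (w : TangentSpace I (1 : G)) :
    mfderiv I I (· * Z) X (mfderiv I I (X * ·) 1 w) = mfderiv I I (fun Y => X * Y * Z) 1 w :=
  (mfderiv_comp_apply_of_eq 1 mdifferentiableAt_mul_right mdifferentiableAt_mul_left (mul_one X)
    w).symm

theorem mfderiv_mul_left_mfderiv_conj [Group G] [ContMDiffMul I 1 G] (X Z : G)
    (w : TangentSpace I (1 : G)) :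
    mfderiv I I ((X * Z) * ·) 1 (mfderiv I I (fun Y => Z⁻¹ * Y * Z) 1 w) =
      mfderiv I I (fun Y => X * Y * Z) 1 w := by
  have hconj : MDifferentiableAt I I (fun Y : G => Z⁻¹ * Y * Z) 1 :=
    mdifferentiableAt_mul_right.comp 1 mdifferentiableAt_mul_left
  have hfactor : ((X * Z) * ·) ∘ (fun Y : G => Z⁻¹ * Y * Z) = fun Y => X * Y * Z := by
    funext Y
    simp only [Function.comp_apply]
    group
  rw [← hfactor]
  exact (mfderiv_comp_apply_of_eq 1 (mdifferentiableAt_mul_left (b := 1)) hconj (by group) w).symm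

theorem mfderiv_mul_right_mfderiv_mul_left_eq_conj [Group G] [ContMDiffMul I 1 G] (X Z : G)
    (w : TangentSpace I (1 : G)) :
    mfderiv I I (· * Z) X (mfderiv I I (X * ·) 1 w) =
      mfderiv I I ((X * Z) * ·) 1 (mfderiv I I (fun Y => Z⁻¹ * Y * Z) 1 w) := by
  rw [mfderiv_mul_right_mfderiv_mul_left, mfderiv_mul_left_mfderiv_conj]

end LieGroup

theorem stmt11_general
    {E : Type*} [NormedAddCommGroup E] [NormedSpace ℝ E]
    {H : Type*} [TopologicalSpace H] (I : ModelWithCorners ℝ E H)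
    {G : Type*} [TopologicalSpace G] [ChartedSpace H G] [Group G] [LieGroup I (⊤ : ℕ∞) G]
    {M : Type*}
    {𝒱 : Type*} [AddCommGroup 𝒱] [Module ℝ 𝒱]
    (φ : G → M → M)
    (hcomp : ∀ (A B : G) (x : M), φ A (φ B x) = φ (B * A) x)
    (ψ : G → 𝒱 →ₗ[ℝ] 𝒱)
    (Λ : M → 𝒱 →ₗ[ℝ] TangentSpace I (1 : G))
    (hΛ_equiv : ∀ (X : G) (ξ : M) (v : 𝒱),
      mfderiv I I (fun Z => X⁻¹ * Z * X) (1 : G) (Λ ξ v) = Λ (φ X ξ) (ψ X v))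
    (ξ0 : M)
    (F : G → 𝒱 → TangentSpace I (1 : G))
    (hF : ∀ (X : G) (v : 𝒱),
      F X v = mfderiv I I (fun Y => X * Y) (1 : G) (Λ (φ X ξ0) v)) :
    ∀ (X Z : G) (v : 𝒱),
      mfderiv I I (fun Y => Y * Z) X (F X v) = F (X * Z) (ψ Z v) := by
  intro X Z v
  rw [hF, hF, mfderiv_mul_right_mfderiv_mul_left_eq_conj, hΛ_equiv, hcomp]

/-- Let `𝔣 : 𝒱 → 𝔛(M)` be an equivariant linear system function and
`Λ : M × 𝒱 → 𝔤` an equivariant lift (`Ad_{X⁻¹} Λ(ξ,v) = Λ(φ_X(ξ), ψ_X(v))`). Fix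
`ξ0 ∈ M` and define the lifted system function `F(X, v) := dL_X Λ(φ_{ξ0}(X), v)` on `G`.
Then `F` is equivariant under right translation: `dR_Z F(X, v) = F(XZ, ψ_Z(v))`. -/
theorem stmt11
    {E : Type*} [NormedAddCommGroup E] [NormedSpace ℝ E]
    {H : Type*} [TopologicalSpace H] (I : ModelWithCorners ℝ E H)
    {G : Type*} [TopologicalSpace G] [ChartedSpace H G] [Group G] [LieGroup I (⊤ : ℕ∞) G]
    {E' : Type*} [NormedAddCommGroup E'] [NormedSpace ℝ E']
    {H' : Type*} [TopologicalSpace H'] (J : ModelWithCorners ℝ E' H')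
    {M : Type*} [TopologicalSpace M] [ChartedSpace H' M] [IsManifold J (⊤ : ℕ∞) M]
    {𝒱 : Type*} [AddCommGroup 𝒱] [Module ℝ 𝒱]
    (φ : G → M → M)
    (hφ : ContMDiff (I.prod J) J (⊤ : ℕ∞) (fun p : G × M => φ p.1 p.2))
    (hcomp : ∀ (A B : G) (x : M), φ A (φ B x) = φ (B * A) x)
    (hid : ∀ x : M, φ 1 x = x)
    (htrans : ∀ x y : M, ∃ A : G, φ A x = y)
    (ψ : G → 𝒱 →ₗ[ℝ] 𝒱)
    (hψ1 : ψ 1 = LinearMap.id)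
    (hψ : ∀ A B : G, (ψ A).comp (ψ B) = ψ (B * A))
    (𝔣 : 𝒱 →ₗ[ℝ] (∀ x : M, TangentSpace J x))
    (h𝔣_equiv : ∀ (X : G) (ξ : M) (v : 𝒱),
      mfderiv J J (φ X) ξ (𝔣 v ξ) = 𝔣 (ψ X v) (φ X ξ))
    (Λ : M → 𝒱 →ₗ[ℝ] TangentSpace I (1 : G))
    (hΛ_lift : ∀ (ξ : M) (v : 𝒱), mfderiv I J (fun A => φ A ξ) (1 : G) (Λ ξ v) = 𝔣 v ξ)
    (hΛ_equiv : ∀ (X : G) (ξ : M) (v : 𝒱),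
      mfderiv I I (fun Z => X⁻¹ * Z * X) (1 : G) (Λ ξ v) = Λ (φ X ξ) (ψ X v))
    (ξ0 : M)
    (F : G → 𝒱 → TangentSpace I (1 : G))
    (hF : ∀ (X : G) (v : 𝒱),
      F X v = mfderiv I I (fun Y => X * Y) (1 : G) (Λ (φ X ξ0) v)) :
    ∀ (X Z : G) (v : 𝒱),
      mfderiv I I (fun Y => Y * Z) X (F X v) = F (X * Z) (ψ Z v) :=
  stmt11_general I φ hcomp ψ Λ hΛ_equiv ξ0 F hF
end

section
/- (Characterisation of equivariant lifts.) Let 𝔣 : 𝒱 → 𝔛(M) be an equivariant linear system function and fix ξ̄ ∈ M. A lift Λ of 𝔣 is equivariant if and only if there exists a map Λ_{ξ̄} : 𝒱 → 𝔤 such that (a) dφ_{ξ̄} Λ_{ξ̄}(v) = 𝔣(ξ̄, v) for all v ∈ 𝒱, and (b) Ad_{S⁻¹} Λ_{ξ̄}(v) = Λ_{ξ̄}(ψ_S(v)) for all S ∈ stab_φ(ξ̄) and v ∈ 𝒱; in that case Λ is given by Λ(φ_X(ξ̄), v) = Ad_{X⁻¹} Λ_{ξ̄}(ψ_{X⁻¹}(v)),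 which is well defined independently of the choice of X with φ_X(ξ̄) = ξ. -/
/-!
Equivariance of `Λ` at the origin `ξ0`, applied to `X` and `ψ_{X⁻¹} v`, is exactly the formula
`Λ(φ_X ξ0, v) = Ad_{X⁻¹} Λ₀(ψ_{X⁻¹} v)` with `Λ₀ = Λ(ξ0, ·)`. Conversely, if `Λ` is given by
this formula, then writing `ξ = φ_Y ξ0` (transitivity), equivariance reduces to
`Ad_{X⁻¹} ∘ Ad_{Y⁻¹} = Ad_{(YX)⁻¹}` together with the corresponding law for the right action `ψ`.
-/

open Manifold

theorem mfderiv_conj_comp_conj_apply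
    {𝕜 : Type*} [NontriviallyNormedField 𝕜]
    {E : Type*} [NormedAddCommGroup E] [NormedSpace 𝕜 E]
    {H : Type*} [TopologicalSpace H] {I : ModelWithCorners 𝕜 E H} {n : WithTop ℕ∞}
    {G : Type*} [TopologicalSpace G] [ChartedSpace H G] [Group G] [LieGroup I n G]
    (hn : n ≠ 0) (X Y : G) (w : TangentSpace I (1 : G)) :
    mfderiv I I (fun Z => X⁻¹ * Z * X) (1 : G) (mfderiv I I (fun Z => Y⁻¹ * Z * Y) (1 : G) w)
      = mfderiv I I (fun Z => (Y * X)⁻¹ * Z * (Y * X)) (1 : G) w := by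
  have hconj : ∀ S : G, MDifferentiable I I (fun Z : G => S⁻¹ * Z * S) := fun S =>
    ((contMDiff_const.mul contMDiff_id).mul contMDiff_const).mdifferentiable hn
  have hfun : (fun Z : G => (Y * X)⁻¹ * Z * (Y * X))
      = (fun Z : G => X⁻¹ * Z * X) ∘ (fun Z : G => Y⁻¹ * Z * Y) := by
    funext Z
    simp [mul_assoc]
  have hX_at : mfderiv I I (fun Z : G => X⁻¹ * Z * X) (Y⁻¹ * 1 * Y)
      = mfderiv I I (fun Z : G => X⁻¹ * Z * X) 1 :=
    congrArg _ (by group)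
  rw [hfun, mfderiv_comp (1 : G) (hconj X _) (hconj Y 1), hX_at]
  rfl

theorem stmt12_general
    {E : Type*} [NormedAddCommGroup E] [NormedSpace ℝ E]
    {H : Type*} [TopologicalSpace H] (I : ModelWithCorners ℝ E H)
    {G : Type*} [TopologicalSpace G] [ChartedSpace H G] [Group G] [LieGroup I ((⊤ : ℕ∞) : WithTop ℕ∞) G]
    {E' : Type*} [NormedAddCommGroup E'] [NormedSpace ℝ E']
    {H' : Type*} [TopologicalSpace H'] (J : ModelWithCorners ℝ E' H')
    {M : Type*} [TopologicalSpace M] [ChartedSpace H' M]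
    {𝒱 : Type*} [AddCommGroup 𝒱] [Module ℝ 𝒱]
    (φ : G → M → M)
    (hcomp : ∀ (A B : G) (x : M), φ A (φ B x) = φ (B * A) x)
    (htrans : ∀ x y : M, ∃ A : G, φ A x = y)
    (ψ : G → 𝒱 →ₗ[ℝ] 𝒱)
    (hψ1 : ψ 1 = LinearMap.id)
    (hψ : ∀ A B : G, (ψ A).comp (ψ B) = ψ (B * A))
    (𝔣 : 𝒱 →ₗ[ℝ] (∀ x : M, TangentSpace J x))
    (ξ0 : M)
    (Λ : M → 𝒱 →ₗ[ℝ] TangentSpace I (1 : G))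
    (hΛ_lift : ∀ (ξ : M) (v : 𝒱),
      mfderiv I J (fun A => φ A ξ) (1 : G) (Λ ξ v) = 𝔣 v ξ) :
    (∀ (X : G) (ξ : M) (v : 𝒱),
        mfderiv I I (fun Z => X⁻¹ * Z * X) (1 : G) (Λ ξ v) = Λ (φ X ξ) (ψ X v)) ↔
    (∃ Λ₀ : 𝒱 →ₗ[ℝ] TangentSpace I (1 : G),
      (∀ v : 𝒱, mfderiv I J (fun A => φ A ξ0) (1 : G) (Λ₀ v) = 𝔣 v ξ0) ∧
      (∀ S : G, φ S ξ0 = ξ0 → ∀ v : 𝒱,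
        mfderiv I I (fun Z => S⁻¹ * Z * S) (1 : G) (Λ₀ v) = Λ₀ (ψ S v)) ∧
      (∀ (X : G) (v : 𝒱),
        Λ (φ X ξ0) v
          = mfderiv I I (fun Z => X⁻¹ * Z * X) (1 : G) (Λ₀ (ψ X⁻¹ v)))) := by
  have hψ_apply (A B : G) (v : 𝒱) : ψ A (ψ B v) = ψ (B * A) v := by
    rw [← LinearMap.comp_apply, hψ]
  constructor
  · intro hequiv
    refine ⟨Λ ξ0, hΛ_lift ξ0, fun S hS v => ?_, fun X v => ?_⟩
    · have h := hequiv S ξ0 v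
      rwa [hS] at h
    · have h := hequiv X ξ0 (ψ X⁻¹ v)
      rw [hψ_apply, inv_mul_cancel, hψ1, LinearMap.id_apply] at h
      exact h.symm
  · rintro ⟨Λ₀, -, -, hformula⟩ X ξ v
    obtain ⟨Y, rfl⟩ := htrans ξ0 ξ
    have hv : ψ (Y * X)⁻¹ (ψ X v) = ψ Y⁻¹ v := by
      rw [hψ_apply]
      congr 2
      group
    rw [hformula Y v, hcomp X Y ξ0, hformula (Y * X) (ψ X v), hv]
    exact mfderiv_conj_comp_conj_apply (n := ((⊤ : ℕ∞) : WithTop ℕ∞)) (by simp) X Y _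

/-- (Characterisation of equivariant lifts.) Let `𝔣 : 𝒱 → 𝔛(M)` be an
equivariant linear system function and `Λ` a lift of `𝔣`, with origin `ξ0 ∈ M`. Then `Λ`
is equivariant iff there is `Λ₀ : 𝒱 → 𝔤` with (a) `dφ_{ξ0} Λ₀(v) = 𝔣(ξ0, v)` and
(b) `Ad_{S⁻¹} Λ₀(v) = Λ₀(ψ_S(v))` for all `S ∈ stab_φ(ξ0)`; in that case
`Λ(φ_X(ξ0), v) = Ad_{X⁻¹} Λ₀(ψ_{X⁻¹}(v))` (well defined independently of the choice of
`X` with `φ_X(ξ0) = ξ`). -/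
theorem stmt12
    {E : Type*} [NormedAddCommGroup E] [NormedSpace ℝ E]
    {H : Type*} [TopologicalSpace H] (I : ModelWithCorners ℝ E H)
    {G : Type*} [TopologicalSpace G] [ChartedSpace H G] [Group G] [LieGroup I ((⊤ : ℕ∞) : WithTop ℕ∞) G]
    {E' : Type*} [NormedAddCommGroup E'] [NormedSpace ℝ E']
    {H' : Type*} [TopologicalSpace H'] (J : ModelWithCorners ℝ E' H')
    {M : Type*} [TopologicalSpace M] [ChartedSpace H' M] [IsManifold J ((⊤ : ℕ∞) : WithTop ℕ∞) M]
    {𝒱 : Type*} [AddCommGroup 𝒱] [Module ℝ 𝒱]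
    (φ : G → M → M)
    (hφ : ContMDiff (I.prod J) J (⊤ : ℕ∞) (fun p : G × M => φ p.1 p.2))
    (hcomp : ∀ (A B : G) (x : M), φ A (φ B x) = φ (B * A) x)
    (hid : ∀ x : M, φ 1 x = x)
    (htrans : ∀ x y : M, ∃ A : G, φ A x = y)
    (ψ : G → 𝒱 →ₗ[ℝ] 𝒱)
    (hψ1 : ψ 1 = LinearMap.id)
    (hψ : ∀ A B : G, (ψ A).comp (ψ B) = ψ (B * A))
    (𝔣 : 𝒱 →ₗ[ℝ] (∀ x : M, TangentSpace J x))
    (h𝔣_equiv : ∀ (X : G) (ξ : M) (v : 𝒱),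
      mfderiv J J (φ X) ξ (𝔣 v ξ) = 𝔣 (ψ X v) (φ X ξ))
    (ξ0 : M)
    (Λ : M → 𝒱 →ₗ[ℝ] TangentSpace I (1 : G))
    (hΛ_lift : ∀ (ξ : M) (v : 𝒱),
      mfderiv I J (fun A => φ A ξ) (1 : G) (Λ ξ v) = 𝔣 v ξ) :
    (∀ (X : G) (ξ : M) (v : 𝒱),
        mfderiv I I (fun Z => X⁻¹ * Z * X) (1 : G) (Λ ξ v) = Λ (φ X ξ) (ψ X v)) ↔
    (∃ Λ₀ : 𝒱 →ₗ[ℝ] TangentSpace I (1 : G),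
      (∀ v : 𝒱, mfderiv I J (fun A => φ A ξ0) (1 : G) (Λ₀ v) = 𝔣 v ξ0) ∧
      (∀ S : G, φ S ξ0 = ξ0 → ∀ v : 𝒱,
        mfderiv I I (fun Z => S⁻¹ * Z * S) (1 : G) (Λ₀ v) = Λ₀ (ψ S v)) ∧
      (∀ (X : G) (v : 𝒱),
        Λ (φ X ξ0) v
          = mfderiv I I (fun Z => X⁻¹ * Z * X) (1 : G) (Λ₀ (ψ X⁻¹ v)))) :=
  stmt12_general I J φ hcomp htrans ψ hψ1 hψ 𝔣 ξ0 Λ hΛ_lift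
end

section
/- (No invariant error on the state space for non-free actions.) Let G be a group, φ : G × M → M an effective and transitive right action on a set M, and φ' : G × 𝒢 → 𝒢 a transitive right action on a set 𝒢. Suppose e : 𝒢 × M → M is an error function such that each partial map e_{X̂} : M → M, ξ ↦ e(X̂, ξ), is a bijection, and e is invariant: e(φ'_A(X̂), φ_A(ξ)) = e(X̂, ξ) for all A ∈ G. Then the action φ' is free (every stabilizer stab_{φ'}(X̂) is trivial), and hence for any X̂ the map A ↦ φ'_A(X̂) is a bijection from G onto 𝒢. -/
/-! If `Z` fixes `X̂`, invariance gives `e_{X̂} (φ_Z ξ) = e_{X̂} ξ` for every `ξ`, so injectivity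
of `e_{X̂}` makes `Z` act trivially on `M`, and effectiveness forces `Z = 1`. A free transitive
action is simply transitive, so every orbit map is a bijection. -/

section RightAction

variable {G : Type*} [Group G] {M 𝒢 : Type*}

theorem eq_one_of_fixed_of_invariant_injective (φ : G → M → M)
    (heff : ∀ A : G, (∀ ξ : M, φ A ξ = ξ) → A = 1)
    (φ' : G → 𝒢 → 𝒢) (e : 𝒢 → M → M) (Xhat : 𝒢) (hinj : Function.Injective (e Xhat))
    (hinv : ∀ (A : G) (ξ : M), e (φ' A Xhat) (φ A ξ) = e Xhat ξ)
    {Z : G} (hZ : φ' Z Xhat = Xhat) : Z = 1 :=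
  heff Z fun ξ => hinj ((congrArg (e · (φ Z ξ)) hZ).symm.trans (hinv Z ξ))

theorem bijective_orbit_map_of_free_of_transitive (φ' : G → 𝒢 → 𝒢)
    (hcomp' : ∀ (A B : G) (x : 𝒢), φ' A (φ' B x) = φ' (B * A) x)
    (hid' : ∀ x : 𝒢, φ' 1 x = x)
    (htrans' : ∀ x y : 𝒢, ∃ A : G, φ' A x = y)
    (Xhat : 𝒢) (hfree : ∀ Z : G, φ' Z Xhat = Xhat → Z = 1) :
    Function.Bijective (fun A : G => φ' A Xhat) := by
  refine ⟨fun A B (hAB : φ' A Xhat = φ' B Xhat) => ?_, htrans' Xhat⟩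
  have hfix : φ' (A * B⁻¹) Xhat = Xhat := by
    rw [← hcomp', hAB, hcomp', mul_inv_cancel, hid']
  exact mul_inv_eq_one.mp (hfree _ hfix)

end RightAction

theorem stmt17_general {G : Type*} [Group G] {M 𝒢 : Type*}
    (φ : G → M → M)
    (heff : ∀ A : G, (∀ ξ : M, φ A ξ = ξ) → A = 1)
    (φ' : G → 𝒢 → 𝒢)
    (hcomp' : ∀ (A B : G) (x : 𝒢), φ' A (φ' B x) = φ' (B * A) x)
    (hid' : ∀ x : 𝒢, φ' 1 x = x)
    (htrans' : ∀ x y : 𝒢, ∃ A : G, φ' A x = y)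
    (e : 𝒢 → M → M)
    (hbij : ∀ Xhat : 𝒢, Function.Bijective (fun ξ : M => e Xhat ξ))
    (hinv : ∀ (A : G) (Xhat : 𝒢) (ξ : M), e (φ' A Xhat) (φ A ξ) = e Xhat ξ) :
    (∀ (Xhat : 𝒢) (Z : G), φ' Z Xhat = Xhat → Z = 1) ∧
    (∀ Xhat : 𝒢, Function.Bijective (fun A : G => φ' A Xhat)) := by
  have hfree : ∀ (Xhat : 𝒢) (Z : G), φ' Z Xhat = Xhat → Z = 1 := fun Xhat _ hZ =>
    eq_one_of_fixed_of_invariant_injective φ heff φ' e Xhat (hbij Xhat).injective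
      (fun A => hinv A Xhat) hZ
  exact ⟨hfree, fun Xhat =>
    bijective_orbit_map_of_free_of_transitive φ' hcomp' hid' htrans' Xhat (hfree Xhat)⟩

/-- Let `φ` be an effective and transitive right action of `G` on `M`,
and `φ'` a transitive right action of `G` on `𝒢`. If `e : 𝒢 × M → M` has bijective
partial maps `e_{X̂}` and is invariant, then `φ'` is free (all its stabilizers are
trivial), and hence for any `X̂` the map `A ↦ φ'(A, X̂)` is a bijection from `G` onto `𝒢`. -/
theorem stmt17 {G : Type*} [Group G] {M 𝒢 : Type*}
    (φ : G → M → M)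
    (hcomp : ∀ (A B : G) (x : M), φ A (φ B x) = φ (B * A) x)
    (hid : ∀ x : M, φ 1 x = x)
    (htrans : ∀ x y : M, ∃ A : G, φ A x = y)
    (heff : ∀ A : G, (∀ ξ : M, φ A ξ = ξ) → A = 1)
    (φ' : G → 𝒢 → 𝒢)
    (hcomp' : ∀ (A B : G) (x : 𝒢), φ' A (φ' B x) = φ' (B * A) x)
    (hid' : ∀ x : 𝒢, φ' 1 x = x)
    (htrans' : ∀ x y : 𝒢, ∃ A : G, φ' A x = y)
    (e : 𝒢 → M → M)
    (hbij : ∀ Xhat : 𝒢, Function.Bijective (fun ξ : M => e Xhat ξ))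
    (hinv : ∀ (A : G) (Xhat : 𝒢) (ξ : M), e (φ' A Xhat) (φ A ξ) = e Xhat ξ) :
    (∀ (Xhat : 𝒢) (Z : G), φ' Z Xhat = Xhat → Z = 1) ∧
    (∀ Xhat : 𝒢, Function.Bijective (fun A : G => φ' A Xhat)) :=
  stmt17_general φ heff φ' hcomp' hid' htrans' e hbij hinv
end

section
/- (Equivariant error dynamics.) Under the assumptions of the group error dynamics, suppose additionally that Λ is an equivariant lift: Ad_{X⁻¹} Λ(ξ,v) = Λ(φ_X(ξ), ψ_X(v)) for all X, ξ, v. Then the state error e(t) = φ(E(t), ξ̄) = φ(X̂(t)⁻¹, ξ(t)) with ξ = φ(X, ξ̄) satisfies ė = dφ_e( Λ(e, ψ_{X̂⁻¹}(v)) − Λ(ξ̄, ψ_{X̂⁻¹}(v)) ) − dφ_e Δ, i.e. the error dynamics depend on the error e only through e itself and the transformed input w = ψ_{X̂⁻¹}(v), apart from the innovation term. -/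
/-!
The state error is `e = φ(X X̂⁻¹, ξ̄)`. The product rule on `G × G` together with
`d(g ↦ g⁻¹)₁ = -id` gives `ė` as the derivative at `1` of `Z ↦ φ(X Z X̂⁻¹, ξ̄)` applied to
`Λ(φ_X ξ̄, v) - Λ(φ_X̂ ξ̄, v)`, minus the derivative of `Z ↦ φ(X X̂⁻¹ Z, ξ̄) = φ(Z, e)` applied
to `Δ`. Since `φ(X Z X̂⁻¹, ξ̄) = φ(X̂ Z X̂⁻¹, e)`, the first term is `dφ_e` of
`Ad_X̂ (Λ(φ_X ξ̄, v) - Λ(φ_X̂ ξ̄, v))`, and equivariance with respect to `X̂⁻¹` turns this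
into `Λ(e, w) - Λ(ξ̄, w)` with `w = ψ_{X̂⁻¹} v`, because `φ_{X̂⁻¹}(φ_X̂ ξ̄) = ξ̄`.
-/

open Manifold

section Chain

variable {𝕜 : Type*} [NontriviallyNormedField 𝕜]
  {E : Type*} [NormedAddCommGroup E] [NormedSpace 𝕜 E] {H : Type*} [TopologicalSpace H]
  {I : ModelWithCorners 𝕜 E H} {M : Type*} [TopologicalSpace M] [ChartedSpace H M]
  {E' : Type*} [NormedAddCommGroup E'] [NormedSpace 𝕜 E'] {H' : Type*} [TopologicalSpace H']
  {I' : ModelWithCorners 𝕜 E' H'} {M' : Type*} [TopologicalSpace M'] [ChartedSpace H' M']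
  {E'' : Type*} [NormedAddCommGroup E''] [NormedSpace 𝕜 E''] {H'' : Type*} [TopologicalSpace H'']
  {I'' : ModelWithCorners 𝕜 E'' H''} {M'' : Type*} [TopologicalSpace M''] [ChartedSpace H'' M'']
  {EN : Type*} [NormedAddCommGroup EN] [NormedSpace 𝕜 EN] {HN : Type*} [TopologicalSpace HN]
  {J : ModelWithCorners 𝕜 EN HN} {N : Type*} [TopologicalSpace N] [ChartedSpace HN N]

theorem mfderiv_apply_mfderiv_of_comp_eq {f : M' → N} {σ : M → M'} {g : M → N} {x : M} {y : M'}
    (hf : MDifferentiableAt I' J f y) (hσ : MDifferentiableAt I I' σ x) (hy : σ x = y)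
    (hg : ∀ z, f (σ z) = g z) (u : TangentSpace I x) :
    mfderiv I' J f y (mfderiv I I' σ x u) = mfderiv I J g x u := by
  rw [← funext hg, ← mfderiv_comp_apply_of_eq x hf hσ hy]
  rfl

theorem mfderiv_comp_prodMk_apply {F : M' × M'' → N} {γ : M → M'} {δ : M → M''} {x : M}
    (hF : MDifferentiableAt (I'.prod I'') J F (γ x, δ x))
    (hγ : MDifferentiableAt I I' γ x) (hδ : MDifferentiableAt I I'' δ x) (u : TangentSpace I x) :
    mfderiv I J (fun s => F (γ s, δ s)) x u
      = mfderiv I' J (fun a => F (a, δ x)) (γ x) (mfderiv I I' γ x u)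
        + mfderiv I'' J (fun b => F (γ x, b)) (δ x) (mfderiv I I'' δ x u) := by
  rw [← mfderiv_apply_mfderiv_of_comp_eq hF (hγ.prodMk hδ) rfl (fun _ => rfl),
    mfderiv_prod_eq_add_apply hF, hγ.mfderiv_prod hδ]
  rfl

end Chain

section LieGroup

variable {𝕜 : Type*} [NontriviallyNormedField 𝕜]
  {E : Type*} [NormedAddCommGroup E] [NormedSpace 𝕜 E] {H : Type*} [TopologicalSpace H]
  {I : ModelWithCorners 𝕜 E H} {G : Type*} [TopologicalSpace G] [ChartedSpace H G] [Group G]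
  [LieGroup I 1 G]
  {E' : Type*} [NormedAddCommGroup E'] [NormedSpace 𝕜 E'] {H' : Type*} [TopologicalSpace H']
  {I' : ModelWithCorners 𝕜 E' H'} {M : Type*} [TopologicalSpace M] [ChartedSpace H' M]
  {EN : Type*} [NormedAddCommGroup EN] [NormedSpace 𝕜 EN] {HN : Type*} [TopologicalSpace HN]
  {J : ModelWithCorners 𝕜 EN HN} {N : Type*} [TopologicalSpace N] [ChartedSpace HN N]

theorem mfderiv_inv_one_apply (u : TangentSpace I (1 : G)) :
    mfderiv I I (fun g : G => g⁻¹) 1 u = -u := by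
  have hmul : MDifferentiableAt (I.prod I) I (fun p : G × G => p.1 * p.2) (1, 1⁻¹) :=
    (contMDiff_mul I 1).mdifferentiableAt one_ne_zero
  have hinv : MDifferentiableAt I I (fun g : G => g⁻¹) 1 :=
    (contMDiff_inv I 1).mdifferentiableAt one_ne_zero
  have key := mfderiv_comp_prodMk_apply hmul mdifferentiableAt_id hinv u
  dsimp only [id_eq] at key
  rw [mfderiv_congr (f' := fun _ => 1) (funext mul_inv_cancel), mfderiv_const,
    mfderiv_congr (f' := id) (funext fun g => by simp), mfderiv_congr_point inv_one,
    mfderiv_congr (f' := id) (funext one_mul), mfderiv_id] at key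
  exact eq_neg_of_add_eq_zero_right key.symm

theorem mfderiv_comp_inv_one_apply {f : G → N} (hf : MDifferentiableAt I J f 1)
    (u : TangentSpace I (1 : G)) :
    mfderiv I J (fun z => f z⁻¹) 1 u = -mfderiv I J f 1 u := by
  rw [← mfderiv_apply_mfderiv_of_comp_eq hf ((contMDiff_inv I 1).mdifferentiableAt one_ne_zero)
    inv_one (fun _ => rfl), mfderiv_inv_one_apply, map_neg]

theorem mfderiv_comp_mul_inv_apply {f : G → N} (hf : MDifferentiable I J f) {X Y : M → G}
    {x : M} (hX : MDifferentiableAt I' I X x) (hY : MDifferentiableAt I' I Y x)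
    {u : TangentSpace I' x} {a b c : TangentSpace I (1 : G)}
    (hXa : mfderiv I' I X x u = mfderiv I I (X x * ·) 1 a)
    (hYbc : mfderiv I' I Y x u
      = (show E from mfderiv I I (Y x * ·) 1 b) + (show E from mfderiv I I (· * Y x) 1 c)) :
    mfderiv I' J (fun s => f (X s * (Y s)⁻¹)) x u
      = (show EN from mfderiv I J (fun z => f (X x * z * (Y x)⁻¹)) 1 (a - b))
        - (show EN from mfderiv I J (fun z => f (X x * (Y x)⁻¹ * z)) 1 c) := by
  have hF : MDifferentiable (I.prod I) J (fun p : G × G => f (p.1 * p.2⁻¹)) :=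
    hf.comp ((contMDiff_fst.mul contMDiff_snd.inv).mdifferentiable one_ne_zero)
  have hleft : MDifferentiableAt I J (fun a => f (a * (Y x)⁻¹)) (X x) :=
    (hf _).comp _ mdifferentiableAt_mul_right
  have hright : MDifferentiable I J (fun b => f (X x * b⁻¹)) :=
    hf.comp ((contMDiff_const.mul (contMDiff_inv I 1)).mdifferentiable one_ne_zero)
  have hpartial₁ : mfderiv I J (fun a => f (a * (Y x)⁻¹)) (X x) (mfderiv I I (X x * ·) 1 a)
      = mfderiv I J (fun z => f (X x * z * (Y x)⁻¹)) 1 a :=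
    mfderiv_apply_mfderiv_of_comp_eq hleft mdifferentiableAt_mul_left (mul_one _) (fun _ => rfl) a
  have hpartial₂ : mfderiv I J (fun b => f (X x * b⁻¹)) (Y x) (mfderiv I I (Y x * ·) 1 b)
      = -mfderiv I J (fun z => f (X x * z * (Y x)⁻¹)) 1 b := by
    rw [mfderiv_apply_mfderiv_of_comp_eq (hright _) mdifferentiableAt_mul_left (mul_one _)
      (g := fun z => f (X x * z⁻¹ * (Y x)⁻¹)) (fun _ => by simp [mul_assoc]),
      mfderiv_comp_inv_one_apply (f := fun z => f (X x * z * (Y x)⁻¹))]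
    exact (hf _).comp _
      (((contMDiff_const.mul contMDiff_id).mul contMDiff_const).mdifferentiableAt one_ne_zero)
  have hpartial₃ : mfderiv I J (fun b => f (X x * b⁻¹)) (Y x) (mfderiv I I (· * Y x) 1 c)
      = -mfderiv I J (fun z => f (X x * (Y x)⁻¹ * z)) 1 c := by
    rw [mfderiv_apply_mfderiv_of_comp_eq (hright _) mdifferentiableAt_mul_right (one_mul _)
      (g := fun z => f (X x * (Y x)⁻¹ * z⁻¹)) (fun _ => by simp [mul_assoc]),
      mfderiv_comp_inv_one_apply (f := fun z => f (X x * (Y x)⁻¹ * z))]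
    exact (hf _).comp _ mdifferentiableAt_mul_left
  have hsplit :=
    mfderiv_comp_prodMk_apply (F := fun p : G × G => f (p.1 * p.2⁻¹)) (hF _) hX hY u
  dsimp only at hsplit hYbc ⊢
  rw [hsplit, hXa, hYbc]
  -- the sums are taken in `E` and `EN`, not in the tangent spaces, hence `erw` and the final step
  erw [map_add]
  rw [hpartial₁, hpartial₂, hpartial₃, map_sub]
  exact (fun p q r : EN => by abel : ∀ p q r : EN, p + (-q + -r) = p - q - r) _ _ _

end LieGroup

theorem stmt19_general
    {E : Type*} [NormedAddCommGroup E] [NormedSpace ℝ E]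
    {H : Type*} [TopologicalSpace H] (I : ModelWithCorners ℝ E H)
    {G : Type*} [TopologicalSpace G] [ChartedSpace H G] [Group G] [LieGroup I (⊤ : ℕ∞) G]
    {E' : Type*} [NormedAddCommGroup E'] [NormedSpace ℝ E']
    {H' : Type*} [TopologicalSpace H'] (J : ModelWithCorners ℝ E' H')
    {M : Type*} [TopologicalSpace M] [ChartedSpace H' M] [IsManifold J (⊤ : ℕ∞) M]
    {𝒱 : Type*} [AddCommGroup 𝒱] [Module ℝ 𝒱]
    (φ : G → M → M)
    (hφ : ContMDiff (I.prod J) J (⊤ : ℕ∞) (fun p : G × M => φ p.1 p.2))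
    (hcomp : ∀ (A B : G) (x : M), φ A (φ B x) = φ (B * A) x)
    (hid : ∀ x : M, φ 1 x = x)
    (ψ : G → 𝒱 →ₗ[ℝ] 𝒱)
    (ξ0 : M)
    (Λ : M → 𝒱 →ₗ[ℝ] TangentSpace I (1 : G))
    (hΛ_equiv : ∀ (X : G) (ξ : M) (v : 𝒱),
      mfderiv I I (fun Z => X⁻¹ * Z * X) (1 : G) (Λ ξ v) = Λ (φ X ξ) (ψ X v))
    (v : 𝒱) (Δ : TangentSpace I (1 : G))
    (X Xhat : ℝ → G)
    (hX_diff : MDifferentiable 𝓘(ℝ, ℝ) I X)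
    (hXhat_diff : MDifferentiable 𝓘(ℝ, ℝ) I Xhat)
    (hX_ode : ∀ t : ℝ, mfderiv 𝓘(ℝ, ℝ) I X t (show ℝ from 1)
      = mfderiv I I (fun Y => X t * Y) (1 : G) (Λ (φ (X t) ξ0) v))
    (hXhat_ode : ∀ t : ℝ, mfderiv 𝓘(ℝ, ℝ) I Xhat t (show ℝ from 1)
      = (show E from mfderiv I I (fun Y => Xhat t * Y) (1 : G) (Λ (φ (Xhat t) ξ0) v))
        + (show E from mfderiv I I (fun Y => Y * Xhat t) (1 : G) Δ))
    (e : ℝ → M) (he : ∀ t : ℝ, e t = φ (Xhat t)⁻¹ (φ (X t) ξ0)) :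
    ∀ t : ℝ, mfderiv 𝓘(ℝ, ℝ) J e t (show ℝ from 1)
      = (show E' from mfderiv I J (fun A => φ A (e t)) (1 : G)
          (Λ (e t) (ψ (Xhat t)⁻¹ v) - Λ ξ0 (ψ (Xhat t)⁻¹ v)))
        - (show E' from mfderiv I J (fun A => φ A (e t)) (1 : G) Δ) := by
  intro t
  have horbit : ∀ x : M, MDifferentiable I J (fun g : G => φ g x) := fun x =>
    (hφ.comp (contMDiff_id.prodMk contMDiff_const)).mdifferentiable (by simp)
  have hdyn : mfderiv 𝓘(ℝ, ℝ) J e t (show ℝ from 1)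
      = (show E' from mfderiv I J (fun z => φ (X t * z * (Xhat t)⁻¹) ξ0) 1
          (Λ (φ (X t) ξ0) v - Λ (φ (Xhat t) ξ0) v))
        - (show E' from mfderiv I J (fun z => φ (X t * (Xhat t)⁻¹ * z) ξ0) 1 Δ) := by
    rw [show e = fun s => φ (X s * (Xhat s)⁻¹) ξ0 from funext fun s => by rw [he, hcomp]]
    exact mfderiv_comp_mul_inv_apply (horbit ξ0) (hX_diff t) (hXhat_diff t) (hX_ode t)
      (hXhat_ode t)
  have hΛ : Λ (e t) (ψ (Xhat t)⁻¹ v) - Λ ξ0 (ψ (Xhat t)⁻¹ v)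
      = mfderiv I I (fun Z => (Xhat t)⁻¹⁻¹ * Z * (Xhat t)⁻¹) 1
          (Λ (φ (X t) ξ0) v - Λ (φ (Xhat t) ξ0) v) := by
    rw [map_sub, hΛ_equiv, hΛ_equiv, ← he t, hcomp, mul_inv_cancel, hid]
    rfl
  have hconj : ∀ w, mfderiv I J (fun A => φ A (e t)) 1
        (mfderiv I I (fun Z => (Xhat t)⁻¹⁻¹ * Z * (Xhat t)⁻¹) 1 w)
      = mfderiv I J (fun z => φ (X t * z * (Xhat t)⁻¹) ξ0) 1 w := fun w =>
    mfderiv_apply_mfderiv_of_comp_eq (σ := fun Z => (Xhat t)⁻¹⁻¹ * Z * (Xhat t)⁻¹)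
      (horbit _ _)
      (((contMDiff_const.mul contMDiff_id).mul contMDiff_const).mdifferentiableAt one_ne_zero)
      (by group) (fun z => by rw [he t, hcomp, hcomp]; congr 1; group) w
  have hΔ : mfderiv I J (fun A => φ A (e t)) 1 Δ
      = mfderiv I J (fun z => φ (X t * (Xhat t)⁻¹ * z) ξ0) 1 Δ := by
    rw [show (fun A => φ A (e t)) = fun z => φ (X t * (Xhat t)⁻¹ * z) ξ0 from
      funext fun z => by rw [he t, hcomp, hcomp, mul_assoc]]
    rfl
  rw [hΛ]
  erw [hconj, hΔ]
  exact hdyn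

/-- (Equivariant error dynamics.) Under the assumptions of the group
error dynamics, if moreover `Λ` is an equivariant lift
(`Ad_{X⁻¹} Λ(ξ,v) = Λ(φ_X(ξ), ψ_X(v))`), then the state error
`e(t) = φ(X̂(t)⁻¹, ξ(t))`, `ξ = φ(X, ξ0)`, satisfies
`ė = dφ_e( Λ(e, ψ_{X̂⁻¹}(v)) − Λ(ξ0, ψ_{X̂⁻¹}(v)) ) − dφ_e Δ`. -/
theorem stmt19
    {E : Type*} [NormedAddCommGroup E] [NormedSpace ℝ E]
    {H : Type*} [TopologicalSpace H] (I : ModelWithCorners ℝ E H)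
    {G : Type*} [TopologicalSpace G] [ChartedSpace H G] [Group G] [LieGroup I (⊤ : ℕ∞) G]
    {E' : Type*} [NormedAddCommGroup E'] [NormedSpace ℝ E']
    {H' : Type*} [TopologicalSpace H'] (J : ModelWithCorners ℝ E' H')
    {M : Type*} [TopologicalSpace M] [ChartedSpace H' M] [IsManifold J (⊤ : ℕ∞) M]
    {𝒱 : Type*} [AddCommGroup 𝒱] [Module ℝ 𝒱]
    (φ : G → M → M)
    (hφ : ContMDiff (I.prod J) J (⊤ : ℕ∞) (fun p : G × M => φ p.1 p.2))
    (hcomp : ∀ (A B : G) (x : M), φ A (φ B x) = φ (B * A) x)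
    (hid : ∀ x : M, φ 1 x = x)
    (htrans : ∀ x y : M, ∃ A : G, φ A x = y)
    (ψ : G → 𝒱 →ₗ[ℝ] 𝒱)
    (hψ1 : ψ 1 = LinearMap.id)
    (hψ : ∀ A B : G, (ψ A).comp (ψ B) = ψ (B * A))
    (ξ0 : M)
    (Λ : M → 𝒱 →ₗ[ℝ] TangentSpace I (1 : G))
    (hΛ_equiv : ∀ (X : G) (ξ : M) (v : 𝒱),
      mfderiv I I (fun Z => X⁻¹ * Z * X) (1 : G) (Λ ξ v) = Λ (φ X ξ) (ψ X v))
    (v : 𝒱) (Δ : TangentSpace I (1 : G))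
    (X Xhat : ℝ → G)
    (hX_diff : MDifferentiable 𝓘(ℝ, ℝ) I X)
    (hXhat_diff : MDifferentiable 𝓘(ℝ, ℝ) I Xhat)
    (hX_ode : ∀ t : ℝ, mfderiv 𝓘(ℝ, ℝ) I X t (show ℝ from 1)
      = mfderiv I I (fun Y => X t * Y) (1 : G) (Λ (φ (X t) ξ0) v))
    (hXhat_ode : ∀ t : ℝ, mfderiv 𝓘(ℝ, ℝ) I Xhat t (show ℝ from 1)
      = (show E from mfderiv I I (fun Y => Xhat t * Y) (1 : G) (Λ (φ (Xhat t) ξ0) v))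
        + (show E from mfderiv I I (fun Y => Y * Xhat t) (1 : G) Δ))
    (e : ℝ → M) (he : ∀ t : ℝ, e t = φ (Xhat t)⁻¹ (φ (X t) ξ0)) :
    ∀ t : ℝ, mfderiv 𝓘(ℝ, ℝ) J e t (show ℝ from 1)
      = (show E' from mfderiv I J (fun A => φ A (e t)) (1 : G)
          (Λ (e t) (ψ (Xhat t)⁻¹ v) - Λ ξ0 (ψ (Xhat t)⁻¹ v)))
        - (show E' from mfderiv I J (fun A => φ A (e t)) (1 : G) Δ) :=
  stmt19_general I J φ hφ hcomp hid ψ ξ0 Λ hΛ_equiv v Δ X Xhat hX_diff hXhat_diff hX_ode hXhat_ode e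
    he
end
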